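/- arXiv:1511.01473 — 2 statements merged into one kernel-verified Lean document; each statement's English description precedes it below -/
import Mathlib

section
/- For odd k, the derivative of M_k satisfies M_k'(q) = (q(1-q))^{(k-1)/2} · k · C(k-1, (k-1)/2), where C denotes the binomial coefficient. -/
/-- `Mk k p` is the probability that a majority of `k` independent voters, each voting
'yes' with probability `p`, vote 'yes' (ties broken by a fair coin). -/
noncomputable def Mk (k : ℕ) (p : ℝ) : ℝ :=
  ∑ j ∈ Finset.range (k + 1), (k.choose j : ℝ) * p ^ j * (1 - p) ^ (k - j) *
    (if k < 2 * j then 1 else if 2 * j = k then 1 / 2 else 0)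

/-!
The summands of `Mk k` are the Bernstein polynomials `b_{k,j}`, and for odd `k = 2m+1` the
majority is the upper tail `j ≥ m + 1`. Since `b_{n+1,ν+1}' = (n+1) (b_{n,ν} - b_{n,ν+1})`,
the derivative of an upper tail of Bernstein polynomials telescopes to a single term
`(n+1) b_{n,a}`; here `n = 2m`, `a = m`.
-/

open Finset Polynomial

theorem derivative_sum_Ico_bernsteinPolynomial (R : Type*) [CommRing R] (n a : ℕ) :
    derivative (∑ ν ∈ Ico (a + 1) (n + 2), bernsteinPolynomial R (n + 1) ν) =
      (n + 1) * bernsteinPolynomial R n a := by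
  rw [derivative_sum, ← sum_Ico_add']
  simp only [bernsteinPolynomial.derivative_succ_aux, ← mul_sum]
  congr 1
  rcases le_or_gt a (n + 1) with ha | ha
  · rw [← neg_inj, ← sum_neg_distrib]
    simp only [neg_sub]
    rw [sum_Ico_sub (bernsteinPolynomial R n) ha,
      bernsteinPolynomial.eq_zero_of_lt R n.lt_succ_self, zero_sub]
  · rw [Ico_eq_empty_of_le ha.le, sum_empty, bernsteinPolynomial.eq_zero_of_lt R (by omega)]

theorem Mk_odd_eq_eval_sum_bernsteinPolynomial (m : ℕ) :
    Mk (2 * m + 1) = fun q =>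
      (∑ ν ∈ Ico (m + 1) (2 * m + 2), bernsteinPolynomial ℝ (2 * m + 1) ν).eval q := by
  ext q
  rw [Mk, range_eq_Ico,
    ← sum_Ico_consecutive _ (Nat.zero_le (m + 1)) (by omega : m + 1 ≤ 2 * m + 2),
    sum_eq_zero fun j hj => by rw [if_neg (by grind), if_neg (by grind), mul_zero], zero_add,
    eval_finsetSum]
  refine sum_congr rfl fun j hj => ?_
  rw [if_pos (by grind), mul_one, bernsteinPolynomial]
  simp

theorem stmt1 (k : ℕ) (hk : Odd k) (q : ℝ) :
    deriv (Mk k) q =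
      (q * (1 - q)) ^ ((k - 1) / 2) * (k : ℝ) * ((k - 1).choose ((k - 1) / 2) : ℝ) := by
  obtain ⟨m, rfl⟩ := hk
  rw [Mk_odd_eq_eval_sum_bernsteinPolynomial, Polynomial.deriv,
    derivative_sum_Ico_bernsteinPolynomial, show 2 * m + 1 - 1 = 2 * m by omega,
    show 2 * m / 2 = m by omega]
  simp only [bernsteinPolynomial, show 2 * m - m = m by omega, eval_mul, eval_add,
    eval_natCast, eval_one, eval_pow, eval_X, eval_sub, mul_pow]
  push_cast
  ring
end

section
/- Let k > 1 be real, let M : [0,1] → [0,1] be continuous, strictly increasing, with M(0)=0, M(1/2)=1/2, M(1)=1, strictly convex on [0,1/2] and strictly concave on [1/2,1], and suppose M(q) < q on some point of (0,1/2). Define ε* by 1/(1-ε*) = max_{q ∈ (0,1]} M(q)/q, achieved at q*. Then 0 < ε* < 1/2 and q* > 1/2, and for every ε ∈ [0, ε*] there exists q ≥ q* in (0,1] with M(q)/q = 1/(1-ε). -/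
/-!
Subtracting the identity preserves strict convexity/concavity, and `M - id` vanishes at `0`, `1/2`
and `1`; hence `M q < q` on `(0, 1/2)` and `q < M q` on `(1/2, 1)`. So the maximal ratio
`M q* / q*` exceeds `1` (test it at `q = 3/4`), which forces `q* > 1/2`, and it is below `2` because
`M q* ≤ 1 < 2 q*`. The ratio `M q / q` is continuous on `[q*, 1]` and runs from `1/(1-ε*)` down to
`M 1 = 1`, so every value `1/(1-ε) ∈ [1, 1/(1-ε*)]` is attained there.
-/

open Set

theorem StrictConvexOn.apply_lt_self_of_mem_Ioo {f : ℝ → ℝ} {a b x : ℝ}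
    (hf : StrictConvexOn ℝ (Icc a b) f) (ha : f a = a) (hb : f b = b) (hx : x ∈ Ioo a b) :
    f x < x := by
  have hab : a < b := hx.1.trans hx.2
  have key := (hf.sub_concaveOn (concaveOn_id (convex_Icc a b))).lt_on_openSegment
    (left_mem_Icc.2 hab.le) (right_mem_Icc.2 hab.le) hab.ne (by rwa [openSegment_eq_Ioo hab])
  simpa only [Pi.sub_apply, id, ha, hb, sub_self, max_self, sub_neg] using key

theorem StrictConcaveOn.self_lt_apply_of_mem_Ioo {f : ℝ → ℝ} {a b x : ℝ}
    (hf : StrictConcaveOn ℝ (Icc a b) f) (ha : f a = a) (hb : f b = b) (hx : x ∈ Ioo a b) :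
    x < f x := by
  have hab : a < b := hx.1.trans hx.2
  have key := (hf.sub_convexOn (convexOn_id (convex_Icc a b))).lt_on_openSegment
    (left_mem_Icc.2 hab.le) (right_mem_Icc.2 hab.le) hab.ne (by rwa [openSegment_eq_Ioo hab])
  simpa only [Pi.sub_apply, id, ha, hb, sub_self, min_self, sub_pos] using key

theorem mem_Ioo_of_one_div_one_sub_mem_Ioo {e : ℝ} (h : 1 / (1 - e) ∈ Ioo 1 2) :
    e ∈ Ioo 0 (1 / 2) := by
  obtain ⟨h1, h2⟩ := h
  have hpos : 0 < 1 - e := one_div_pos.1 (one_pos.trans h1)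
  rw [lt_div_iff₀ hpos] at h1
  rw [div_lt_iff₀ hpos] at h2
  constructor <;> linarith

theorem exists_div_self_eq_of_mem_Icc {M : ℝ → ℝ} {p t : ℝ} (hcont : ContinuousOn M (Icc 0 1))
    (hp : p ∈ Ioc 0 1) (h1 : M 1 = 1) (ht : t ∈ Icc 1 (M p / p)) :
    ∃ q ∈ Icc p 1, M q / q = t := by
  have hratio : ContinuousOn (fun q ↦ M q / q) (Icc p 1) :=
    (hcont.mono (Icc_subset_Icc_left hp.1.le)).div continuousOn_id
      fun q hq ↦ (hp.1.trans_le hq.1).ne'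
  exact intermediate_value_Icc' hp.2 hratio (by simpa [h1] using ht)

theorem stmt17_general (M : ℝ → ℝ)
    (hcont : ContinuousOn M (Set.Icc 0 1))
    (hrange : ∀ q ∈ Set.Icc (0 : ℝ) 1, M q ∈ Set.Icc (0 : ℝ) 1)
    (h0 : M 0 = 0) (hhalf : M (1 / 2) = 1 / 2) (h1 : M 1 = 1)
    (hconvex : StrictConvexOn ℝ (Set.Icc (0 : ℝ) (1 / 2)) M)
    (hconcave : StrictConcaveOn ℝ (Set.Icc (1 / 2 : ℝ) 1) M)
    (εs qs : ℝ) (hqs : qs ∈ Set.Ioc (0 : ℝ) 1)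
    (hmax : ∀ q ∈ Set.Ioc (0 : ℝ) 1, M q / q ≤ M qs / qs)
    (hεs : 1 / (1 - εs) = M qs / qs) :
    0 < εs ∧ εs < 1 / 2 ∧ 1 / 2 < qs ∧
      ∀ ε ∈ Set.Icc (0 : ℝ) εs, ∃ q ∈ Set.Ioc (0 : ℝ) 1, qs ≤ q ∧ M q / q = 1 / (1 - ε) := by
  have hqs0 : 0 < qs := hqs.1
  have hratio_gt_one : 1 < M qs / qs :=
    calc 1 < M (3 / 4) / (3 / 4) :=
          (one_lt_div (by norm_num)).2 (hconcave.self_lt_apply_of_mem_Ioo hhalf h1 (by norm_num))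
      _ ≤ M qs / qs := hmax (3 / 4) (by norm_num)
  have hqs_half : 1 / 2 < qs := by
    by_contra! hle
    have hM : M qs ≤ qs := hle.lt_or_eq.elim
      (fun hlt ↦ (hconvex.apply_lt_self_of_mem_Ioo h0 hhalf ⟨hqs0, hlt⟩).le)
      (fun heq ↦ by rw [heq, hhalf])
    exact hratio_gt_one.not_ge ((div_le_one hqs0).2 hM)
  have hratio_lt_two : M qs / qs < 2 := by
    rw [div_lt_iff₀ hqs0]
    linarith [(hrange qs (Ioc_subset_Icc_self hqs)).2]
  obtain ⟨hεs0, hεs_half⟩ :=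
    mem_Ioo_of_one_div_one_sub_mem_Ioo (by rw [hεs]; exact ⟨hratio_gt_one, hratio_lt_two⟩)
  refine ⟨hεs0, hεs_half, hqs_half, fun ε hε ↦ ?_⟩
  have ht : 1 / (1 - ε) ∈ Icc 1 (M qs / qs) := by
    rw [← hεs]
    constructor
    · rw [le_div_iff₀ (by linarith [hε.2])]; linarith [hε.1]
    · exact one_div_le_one_div_of_le (by linarith) (by linarith [hε.2])
  obtain ⟨q, hq, hMq⟩ := exists_div_self_eq_of_mem_Icc hcont hqs h1 ht
  exact ⟨q, ⟨hqs0.trans_le hq.1, hq.2⟩, hq.1, hMq⟩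

theorem stmt17 (k : ℝ) (hk : 1 < k) (M : ℝ → ℝ)
    (hcont : ContinuousOn M (Set.Icc 0 1))
    (hmono : StrictMonoOn M (Set.Icc 0 1))
    (hrange : ∀ q ∈ Set.Icc (0 : ℝ) 1, M q ∈ Set.Icc (0 : ℝ) 1)
    (h0 : M 0 = 0) (hhalf : M (1 / 2) = 1 / 2) (h1 : M 1 = 1)
    (hconvex : StrictConvexOn ℝ (Set.Icc (0 : ℝ) (1 / 2)) M)
    (hconcave : StrictConcaveOn ℝ (Set.Icc (1 / 2 : ℝ) 1) M)
    (hbelow : ∃ q ∈ Set.Ioo (0 : ℝ) (1 / 2), M q < q)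
    (εs qs : ℝ) (hqs : qs ∈ Set.Ioc (0 : ℝ) 1)
    (hmax : ∀ q ∈ Set.Ioc (0 : ℝ) 1, M q / q ≤ M qs / qs)
    (hεs : 1 / (1 - εs) = M qs / qs) :
    0 < εs ∧ εs < 1 / 2 ∧ 1 / 2 < qs ∧
      ∀ ε ∈ Set.Icc (0 : ℝ) εs, ∃ q ∈ Set.Ioc (0 : ℝ) 1, qs ≤ q ∧ M q / q = 1 / (1 - ε) :=
  stmt17_general M hcont hrange h0 hhalf h1 hconvex hconcave εs qs hqs hmax hεs
end
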